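/- arXiv:1301.0068 — 5 statements merged into one kernel-verified Lean document; each statement's English description precedes it below -/
import Mathlib

section
/- In the K-mer graph constructed from the (K+1)-spectrum of a cyclic string s (nodes are the distinct K-mers of s, and there is an edge u→v for each distinct (K+1)-mer of s whose K-prefix is u and K-suffix is v), the string s corresponds to a unique cycle that traverses every edge at least once, where the cycle visits, in order, the K-mers starting at consecutive positions of s. -/
/-!
STATEMENT 2: In the K-mer graph constructed from the (K+1)-spectrum of a cyclic
string s, the string s corresponds to a unique cycle traversing every edge at
least once, the cycle visiting in order the K-mers starting at consecutive
positions of s.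
-/

def word {G : ℕ} {α : Type*} (s : ZMod G → α) (m : ℕ) (t : ZMod G) : List α :=
  (List.range m).map (fun i => s (t + (i : ℕ)))

/-- `c` is a closed walk of length `G` in the `K`-mer graph of `s`: each node is a
`K`-mer of `s`, and consecutive nodes are joined by an edge, i.e. a `(K+1)`-mer of
`s` whose `K`-prefix is the first node and whose `K`-suffix is the second. -/
def IsKmerWalk {G : ℕ} {α : Type*} (s : ZMod G → α) (K : ℕ)
    (c : ZMod G → List α) : Prop :=
  ∀ t : ZMod G,
    (∃ p : ZMod G, c t = word s K p) ∧
    (c t).drop 1 = (c (t + 1)).take (K - 1) ∧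
    (∃ p : ZMod G, c t ++ (c (t + 1)).drop (K - 1) = word s (K + 1) p)

/-- Reading off the first character of each successive node spells out `s`. -/
def Spells {G : ℕ} {α : Type*} (s : ZMod G → α) (c : ZMod G → List α) : Prop :=
  ∀ t : ZMod G, (c t).head? = some (s t)

lemma word_length {G : ℕ} {α : Type*} (s : ZMod G → α) (m : ℕ) (t : ZMod G) :
    (word s m t).length = m := by simp [word]

lemma word_get? {G : ℕ} {α : Type*} (s : ZMod G → α) (m : ℕ) (t : ZMod G)
    (i : ℕ) (hi : i < m) : (word s m t)[i]? = some (s (t + (i : ℕ))) := by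
  simp [word, List.getElem?_range, hi]

lemma walk_eq_word {G K : ℕ} [NeZero G] {α : Type*} (s : ZMod G → α) (hK : 1 ≤ K)
    (c : ZMod G → List α) (hw : IsKmerWalk s K c) (hs : Spells s c) (t : ZMod G) :
    c t = word s K t := by
  have hlen : ∀ t, (c t).length = K := by
    intro t
    obtain ⟨p, hp⟩ := (hw t).1
    rw [hp, word_length]
  have key : ∀ i, i < K → ∀ t : ZMod G, (c t)[i]? = some (s (t + (i : ℕ))) := by
    intro i
    induction i with
    | zero =>
      intro _ t
      have := hs t
      rwa [List.head?_eq_getElem?, Nat.cast_zero, add_zero] at *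
    | succ i ih =>
      intro hi t
      have h1 : (c t)[i+1]? = ((c t).drop 1)[i]? := by
        rw [List.getElem?_drop, Nat.add_comm]
      rw [h1, (hw t).2.1, List.getElem?_take, if_pos (by omega : i < K - 1),
        ih (by omega) (t + 1)]
      congr 1
      push_cast
      ring
  apply List.ext_getElem?
  intro i
  by_cases hi : i < K
  · rw [key i hi t, word_get? s K t i hi]
  · rw [List.getElem?_eq_none (by rw [hlen]; omega),
      List.getElem?_eq_none (by rw [word_length]; omega)]

lemma word_edge {G K : ℕ} [NeZero G] {α : Type*} (s : ZMod G → α) (hK : 1 ≤ K)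
    (t : ZMod G) :
    word s K t ++ (word s K (t+1)).drop (K-1) = word s (K+1) t := by
  have hdrop : ∀ u : ZMod G, (word s (K+1) u).drop K = [s (u + (K : ℕ))] := by
    intro u
    apply List.ext_getElem?
    intro i
    rcases Nat.eq_zero_or_pos i with h | h
    · subst h
      rw [List.getElem?_drop]
      simp [word_get? s (K+1) u K (by omega)]
    · rw [List.getElem?_drop, List.getElem?_eq_none (by rw [word_length]; omega),
        List.getElem?_eq_none (by simp; omega)]
  have hword1 : ∀ u : ZMod G, word s (K+1) u = word s K u ++ [s (u + (K : ℕ))] := by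
    intro u
    have : word s K u = (word s (K+1) u).take K := by
      apply List.ext_getElem?
      intro i
      by_cases hi : i < K
      · rw [word_get? s K u i hi, List.getElem?_take, if_pos hi, word_get? s (K+1) u i (by omega)]
      · rw [List.getElem?_eq_none (by rw [word_length]; omega),
          List.getElem?_eq_none (by simp [word_length]; omega)]
    rw [this, ← hdrop u, List.take_append_drop]
  have hdrop2 : (word s K (t+1)).drop (K-1) = [s (t + (K : ℕ))] := by
    apply List.ext_getElem?
    intro i
    rcases Nat.eq_zero_or_pos i with h | h
    · subst h
      rw [List.getElem?_drop]
      rw [word_get? s K (t+1) (K-1+0) (by omega)]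
      simp only [List.getElem?_cons_zero]
      congr 2
      rw [Nat.add_zero, Nat.cast_sub hK]
      push_cast
      ring
    · rw [List.getElem?_drop, List.getElem?_eq_none (by rw [word_length]; omega),
        List.getElem?_eq_none (by simp; omega)]
  rw [hdrop2, hword1 t]

lemma word_is_walk {G K : ℕ} [NeZero G] {α : Type*} (s : ZMod G → α) (hK : 1 ≤ K)
    (hG : K + 1 ≤ G) : IsKmerWalk s K (fun t => word s K t) := by
  intro t
  refine ⟨⟨t, rfl⟩, ?_, ⟨t, word_edge s hK t⟩⟩
  · simp only
    apply List.ext_getElem?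
    intro i
    by_cases hi : i < K - 1
    · rw [List.getElem?_drop, List.getElem?_take, if_pos hi,
        word_get? s K t (1+i) (by omega), word_get? s K (t+1) i (by omega)]
      congr 1
      push_cast
      ring
    · rw [List.getElem?_eq_none (by simp [word_length]; omega),
        List.getElem?_eq_none (by simp [word_length]; omega)]

theorem kmer_graph_unique_covering_cycle {G K : ℕ} [NeZero G] {α : Type*}
    (s : ZMod G → α) (hK : 1 ≤ K) (hG : K + 1 ≤ G) :
    (∃! c : ZMod G → List α, IsKmerWalk s K c ∧ Spells s c) ∧
    (∀ c : ZMod G → List α, IsKmerWalk s K c → Spells s c →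
      -- the cycle traverses every edge (i.e. every (K+1)-mer of s) at least once,
      (∀ p : ZMod G, ∃ t : ZMod G,
        c t ++ (c (t + 1)).drop (K - 1) = word s (K + 1) p) ∧
      -- and it visits, in order, the K-mers at consecutive positions of s
      (∃ t₀ : ZMod G, ∀ t : ZMod G, c t = word s K (t₀ + t))) := by
  have hspell : Spells s (fun t => word s K t) := by
    intro t
    rw [List.head?_eq_getElem?, word_get? s K t 0 (by omega)]
    simp
  have hwalk := word_is_walk s hK hG
  constructor
  · refine ⟨fun t => word s K t, ⟨hwalk, hspell⟩, ?_⟩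
    intro c ⟨hw, hs⟩
    funext t
    exact walk_eq_word s hK c hw hs t
  · intro c hw hs
    have hc : ∀ t, c t = word s K t := walk_eq_word s hK c hw hs
    constructor
    · intro p
      refine ⟨p, ?_⟩
      rw [hc p, hc (p+1)]
      exact word_edge s hK p
    · exact ⟨0, fun t => by rw [hc t, zero_add]⟩
end

section
/- In the K-mer graph of the (K+1)-spectrum of s, if the cycle C(s) corresponding to s traverses some edge (u,v) at least twice and s has no triple repeat of length at least K, then outdeg(u)=1 and indeg(v)=1 (hence the edge is contracted in the condensed graph). -/
def IsTriRep {G : ℕ} {α : Type*} (s : ZMod G → α) (ℓ : ℕ) (t₁ t₂ t₃ : ZMod G) : Prop :=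
  t₁ ≠ t₂ ∧ t₁ ≠ t₃ ∧ t₂ ≠ t₃ ∧
  word s ℓ t₁ = word s ℓ t₂ ∧ word s ℓ t₂ = word s ℓ t₃ ∧
  ¬(s (t₁ - 1) = s (t₂ - 1) ∧ s (t₂ - 1) = s (t₃ - 1)) ∧
  ¬(s (t₁ + (ℓ : ℕ)) = s (t₂ + (ℓ : ℕ)) ∧ s (t₂ + (ℓ : ℕ)) = s (t₃ + (ℓ : ℕ)))

/-- The set of distinct length-`m` substrings of the cyclic string `s`. -/
def spectrumS {G : ℕ} [NeZero G] {α : Type*} [DecidableEq α]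
    (s : ZMod G → α) (m : ℕ) : Finset (List α) :=
  Finset.univ.image (word s m)

/-- Out-degree of the K-mer `u` in the K-mer graph: number of distinct
(K+1)-mers of `s` with K-prefix `u`. -/
def outdegK {G : ℕ} [NeZero G] {α : Type*} [DecidableEq α]
    (s : ZMod G → α) (K : ℕ) (u : List α) : ℕ :=
  ((spectrumS s (K + 1)).filter (fun w => w.take K = u)).card

/-- In-degree of the K-mer `v` in the K-mer graph: number of distinct
(K+1)-mers of `s` with K-suffix `v`. -/
def indegK {G : ℕ} [NeZero G] {α : Type*} [DecidableEq α]
    (s : ZMod G → α) (K : ℕ) (v : List α) : ℕ :=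
  ((spectrumS s (K + 1)).filter (fun w => w.drop 1 = v)).card

lemma word_eq_iff {G : ℕ} {α : Type*} (s : ZMod G → α) (m : ℕ) (t t' : ZMod G) :
    word s m t = word s m t' ↔ ∀ i < m, s (t + (i : ℕ)) = s (t' + (i : ℕ)) := by
  unfold word; rw [List.map_eq_map_iff]; simp

/-- Extend rightwards: left extension already breaks. -/
lemma trirep_extend_right {G : ℕ} [NeZero G] {α : Type*} [DecidableEq α]
    (s : ZMod G → α) (ℓ : ℕ) (t₁ t₂ t₃ : ZMod G)
    (h12 : t₁ ≠ t₂) (h13 : t₁ ≠ t₃) (h23 : t₂ ≠ t₃)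
    (w12 : word s ℓ t₁ = word s ℓ t₂) (w23 : word s ℓ t₂ = word s ℓ t₃)
    (hleft : ¬(s (t₁ - 1) = s (t₂ - 1) ∧ s (t₂ - 1) = s (t₃ - 1))) :
    ∃ ℓ', ℓ ≤ ℓ' ∧ IsTriRep s ℓ' t₁ t₂ t₃ := by
  have hP : ∃ m : ℕ, ¬(s (t₁ + ((ℓ + m : ℕ) : ZMod G)) = s (t₂ + ((ℓ + m : ℕ) : ZMod G)) ∧
      s (t₂ + ((ℓ + m : ℕ) : ZMod G)) = s (t₃ + ((ℓ + m : ℕ) : ZMod G))) := by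
    by_contra hall
    push_neg at hall
    obtain ⟨m, hm⟩ := ZMod.natCast_zmod_surjective (n := G) (-1 - (ℓ : ZMod G))
    have key : ((ℓ + m : ℕ) : ZMod G) = -1 := by push_cast; rw [hm]; ring
    apply hleft
    have h1 := (hall m).1
    have h2 := (hall m).2
    rw [key] at h1 h2
    constructor
    · simpa [sub_eq_add_neg] using h1
    · simpa [sub_eq_add_neg] using h2
  classical
  set m₀ := Nat.find hP with hm₀
  have hspec := Nat.find_spec hP
  have hmin : ∀ j < m₀, s (t₁ + ((ℓ + j : ℕ) : ZMod G)) = s (t₂ + ((ℓ + j : ℕ) : ZMod G)) ∧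
      s (t₂ + ((ℓ + j : ℕ) : ZMod G)) = s (t₃ + ((ℓ + j : ℕ) : ZMod G)) := by
    intro j hj
    have := Nat.find_min hP hj
    tauto
  refine ⟨ℓ + m₀, Nat.le_add_right _ _, h12, h13, h23, ?_, ?_, hleft, ?_⟩
  · rw [word_eq_iff]
    intro i hi
    rcases lt_or_ge i ℓ with h | h
    · exact (word_eq_iff s ℓ t₁ t₂).mp w12 i h
    · have : i = ℓ + (i - ℓ) := by omega
      rw [this]
      exact (hmin (i - ℓ) (by omega)).1
  · rw [word_eq_iff]
    intro i hi
    rcases lt_or_ge i ℓ with h | h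
    · exact (word_eq_iff s ℓ t₂ t₃).mp w23 i h
    · have : i = ℓ + (i - ℓ) := by omega
      rw [this]
      exact (hmin (i - ℓ) (by omega)).2
  · exact hspec

/-- Extend leftwards: right extension already breaks. -/
lemma trirep_extend_left {G : ℕ} [NeZero G] {α : Type*} [DecidableEq α]
    (s : ZMod G → α) (ℓ : ℕ) (t₁ t₂ t₃ : ZMod G)
    (h12 : t₁ ≠ t₂) (h13 : t₁ ≠ t₃) (h23 : t₂ ≠ t₃)
    (w12 : word s ℓ t₁ = word s ℓ t₂) (w23 : word s ℓ t₂ = word s ℓ t₃)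
    (hright : ¬(s (t₁ + (ℓ : ℕ)) = s (t₂ + (ℓ : ℕ)) ∧ s (t₂ + (ℓ : ℕ)) = s (t₃ + (ℓ : ℕ)))) :
    ∃ ℓ', ℓ ≤ ℓ' ∧ ∃ u₁ u₂ u₃ : ZMod G, IsTriRep s ℓ' u₁ u₂ u₃ := by
  have hP : ∃ m : ℕ, ¬(s (t₁ - ((m + 1 : ℕ) : ZMod G)) = s (t₂ - ((m + 1 : ℕ) : ZMod G)) ∧
      s (t₂ - ((m + 1 : ℕ) : ZMod G)) = s (t₃ - ((m + 1 : ℕ) : ZMod G))) := by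
    by_contra hall
    push_neg at hall
    obtain ⟨m, hm⟩ := ZMod.natCast_zmod_surjective (n := G) (-(ℓ : ZMod G) - 1)
    have key : ((m + 1 : ℕ) : ZMod G) = -(ℓ : ℕ) := by push_cast; rw [hm]; ring
    apply hright
    have h1 := (hall m).1
    have h2 := (hall m).2
    rw [key] at h1 h2
    constructor
    · simpa [sub_eq_add_neg] using h1
    · simpa [sub_eq_add_neg] using h2
  classical
  set m₀ := Nat.find hP with hm₀
  have hspec := Nat.find_spec hP
  have hmin : ∀ j < m₀, s (t₁ - ((j + 1 : ℕ) : ZMod G)) = s (t₂ - ((j + 1 : ℕ) : ZMod G)) ∧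
      s (t₂ - ((j + 1 : ℕ) : ZMod G)) = s (t₃ - ((j + 1 : ℕ) : ZMod G)) := by
    intro j hj
    have := Nat.find_min hP hj
    tauto
  refine ⟨ℓ + m₀, Nat.le_add_right _ _, t₁ - (m₀ : ℕ), t₂ - (m₀ : ℕ), t₃ - (m₀ : ℕ),
    ?_, ?_, ?_, ?_, ?_, ?_, ?_⟩
  · simpa [sub_left_inj] using h12
  · simpa [sub_left_inj] using h13
  · simpa [sub_left_inj] using h23
  · rw [word_eq_iff]
    intro i hi
    rcases lt_or_ge i m₀ with h | h
    · have hcast : (m₀ : ZMod G) = (((m₀ - i - 1) + 1 : ℕ) : ZMod G) + (i : ℕ) := by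
        rw [← Nat.cast_add]; congr 1; omega
      have hpos : ∀ t : ZMod G, t - (m₀ : ℕ) + (i : ℕ) = t - (((m₀ - i - 1) + 1 : ℕ) : ZMod G) := by
        intro t
        rw [hcast]; ring
      rw [hpos, hpos]
      exact (hmin (m₀ - i - 1) (by omega)).1
    · have hpos : ∀ t : ZMod G, t - (m₀ : ℕ) + (i : ℕ) = t + ((i - m₀ : ℕ) : ZMod G) := by
        intro t
        have : (i : ZMod G) = ((i - m₀ : ℕ) : ZMod G) + (m₀ : ℕ) := by
          rw [← Nat.cast_add]; congr 1; omega
        rw [this]; ring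
      rw [hpos, hpos]
      exact (word_eq_iff s ℓ t₁ t₂).mp w12 (i - m₀) (by omega)
  · rw [word_eq_iff]
    intro i hi
    rcases lt_or_ge i m₀ with h | h
    · have hcast : (m₀ : ZMod G) = (((m₀ - i - 1) + 1 : ℕ) : ZMod G) + (i : ℕ) := by
        rw [← Nat.cast_add]; congr 1; omega
      have hpos : ∀ t : ZMod G, t - (m₀ : ℕ) + (i : ℕ) = t - (((m₀ - i - 1) + 1 : ℕ) : ZMod G) := by
        intro t
        rw [hcast]; ring
      rw [hpos, hpos]
      exact (hmin (m₀ - i - 1) (by omega)).2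
    · have hpos : ∀ t : ZMod G, t - (m₀ : ℕ) + (i : ℕ) = t + ((i - m₀ : ℕ) : ZMod G) := by
        intro t
        have : (i : ZMod G) = ((i - m₀ : ℕ) : ZMod G) + (m₀ : ℕ) := by
          rw [← Nat.cast_add]; congr 1; omega
        rw [this]; ring
      rw [hpos, hpos]
      exact (word_eq_iff s ℓ t₂ t₃).mp w23 (i - m₀) (by omega)
  · have hpos : ∀ t : ZMod G, t - (m₀ : ℕ) - 1 = t - ((m₀ + 1 : ℕ) : ZMod G) := by
      intro t; push_cast; ring
    rw [hpos, hpos, hpos]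
    exact hspec
  · have hpos : ∀ t : ZMod G, t - (m₀ : ℕ) + ((ℓ + m₀ : ℕ) : ZMod G) = t + (ℓ : ℕ) := by
      intro t; push_cast; ring
    rw [hpos, hpos, hpos]
    exact hright

lemma word_take {G : ℕ} {α : Type*} (s : ZMod G → α) (K : ℕ) (t : ZMod G) :
    (word s (K + 1) t).take K = word s K t := by
  unfold word
  rw [← List.map_take, List.take_range]
  simp

lemma word_drop {G : ℕ} {α : Type*} (s : ZMod G → α) (K : ℕ) (t : ZMod G) :
    (word s (K + 1) t).drop 1 = word s K (t + 1) := by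
  unfold word
  rw [List.range_succ_eq_map]
  simp only [List.map_cons, List.drop_succ_cons, List.drop_zero, List.map_map]
  apply List.map_congr_left
  intro i _
  simp only [Function.comp_apply, Nat.succ_eq_add_one]
  push_cast
  ring_nf

/-- If the (K+1)-mer (edge) at position `t₁` also occurs at `t₂ ≠ t₁` (so C(s)
traverses this edge at least twice), and `s` has no triple repeat of length ≥ K,
then the source K-mer has out-degree 1 and the target K-mer has in-degree 1;
hence this edge is contracted in the condensed graph. -/
theorem doubly_traversed_edge_is_contractible {G K : ℕ} [NeZero G]
    {α : Type*} [DecidableEq α] (s : ZMod G → α) (hK : 1 ≤ K) (hG : K + 1 ≤ G)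
    (hnotri : ¬ ∃ (ℓ : ℕ) (t₁ t₂ t₃ : ZMod G), K ≤ ℓ ∧ IsTriRep s ℓ t₁ t₂ t₃)
    (t₁ t₂ : ZMod G) (hne : t₁ ≠ t₂)
    (heq : word s (K + 1) t₁ = word s (K + 1) t₂) :
    outdegK s K (word s K t₁) = 1 ∧ indegK s K (word s K (t₁ + 1)) = 1 := by
  have hK2 : ∀ i < K + 1, s (t₁ + (i : ℕ)) = s (t₂ + (i : ℕ)) :=
    (word_eq_iff s (K + 1) t₁ t₂).mp heq
  have wK12 : word s K t₁ = word s K t₂ := by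
    rw [word_eq_iff]; intro i hi; exact hK2 i (by omega)
  have hs0 : s t₁ = s t₂ := by
    have := hK2 0 (by omega); simpa using this
  have hsK : s (t₁ + (K : ℕ)) = s (t₂ + (K : ℕ)) := hK2 K (by omega)
  constructor
  · -- out-degree
    have key : (spectrumS s (K + 1)).filter (fun w => w.take K = word s K t₁)
        = {word s (K + 1) t₁} := by
      ext w
      simp only [Finset.mem_filter, Finset.mem_singleton, spectrumS, Finset.mem_image,
        Finset.mem_univ, true_and]
      constructor
      · rintro ⟨⟨t₃, rfl⟩, htake⟩
        have h31 : word s K t₃ = word s K t₁ := by rw [← word_take s K t₃]; exact htake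
        have hlast : s (t₃ + (K : ℕ)) = s (t₁ + (K : ℕ)) := by
          by_contra hne3
          have h13 : t₁ ≠ t₃ := by rintro rfl; exact hne3 rfl
          have h23 : t₂ ≠ t₃ := by rintro rfl; exact hne3 hsK.symm
          have w23 : word s K t₂ = word s K t₃ := wK12.symm.trans h31.symm
          have hright : ¬(s (t₁ + (K : ℕ)) = s (t₂ + (K : ℕ)) ∧
              s (t₂ + (K : ℕ)) = s (t₃ + (K : ℕ))) := by
            rintro ⟨ha, hb⟩
            exact hne3 ((ha.trans hb).symm)
          obtain ⟨ℓ', hℓ', u₁, u₂, u₃, htr⟩ :=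
            trirep_extend_left s K t₁ t₂ t₃ hne h13 h23 wK12 w23 hright
          exact hnotri ⟨ℓ', u₁, u₂, u₃, hℓ', htr⟩
        rw [word_eq_iff]
        intro i hi
        rcases Nat.lt_succ_iff_lt_or_eq.mp hi with h | h
        · exact (word_eq_iff s K t₃ t₁).mp h31 i h
        · subst h; exact hlast
      · rintro rfl
        exact ⟨⟨t₁, rfl⟩, word_take s K t₁⟩
    rw [outdegK, key, Finset.card_singleton]
  · -- in-degree
    have key : (spectrumS s (K + 1)).filter (fun w => w.drop 1 = word s K (t₁ + 1))
        = {word s (K + 1) t₁} := by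
      ext w
      simp only [Finset.mem_filter, Finset.mem_singleton, spectrumS, Finset.mem_image,
        Finset.mem_univ, true_and]
      constructor
      · rintro ⟨⟨t₄, rfl⟩, hdrop⟩
        have h41 : word s K (t₄ + 1) = word s K (t₁ + 1) := by
          rw [← word_drop s K t₄]; exact hdrop
        have hshift : ∀ (t : ZMod G) (i : ℕ), t + 1 + (i : ℕ) = t + ((i + 1 : ℕ) : ZMod G) := by
          intro t i; push_cast; ring
        have hfirst : s t₄ = s t₁ := by
          by_contra hne4
          have h14 : t₁ + 1 ≠ t₄ + 1 := by
            intro h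
            have : t₁ = t₄ := by exact add_right_cancel h
            exact hne4 (this ▸ rfl)
          have h12' : t₁ + 1 ≠ t₂ + 1 := fun h => hne (add_right_cancel h)
          have h24 : t₂ + 1 ≠ t₄ + 1 := by
            intro h
            have : t₂ = t₄ := add_right_cancel h
            exact hne4 (this ▸ hs0.symm)
          have w12' : word s K (t₁ + 1) = word s K (t₂ + 1) := by
            rw [word_eq_iff]
            intro i hi
            rw [hshift, hshift]
            exact hK2 (i + 1) (by omega)
          have w24 : word s K (t₂ + 1) = word s K (t₄ + 1) := w12'.symm.trans h41.symm
          have hleft : ¬(s (t₁ + 1 - 1) = s (t₂ + 1 - 1) ∧ s (t₂ + 1 - 1) = s (t₄ + 1 - 1)) := by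
            simp only [add_sub_cancel_right]
            rintro ⟨ha, hb⟩
            exact hne4 ((hb.symm.trans ha.symm))
          obtain ⟨ℓ', hℓ', htr⟩ :=
            trirep_extend_right s K (t₁ + 1) (t₂ + 1) (t₄ + 1) h12' h14 h24 w12' w24 hleft
          exact hnotri ⟨ℓ', t₁ + 1, t₂ + 1, t₄ + 1, hℓ', htr⟩
        rw [word_eq_iff]
        intro i hi
        rcases Nat.eq_zero_or_pos i with h | h
        · subst h; simpa using hfirst
        · obtain ⟨j, rfl⟩ : ∃ j, i = j + 1 := ⟨i - 1, by omega⟩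
          rw [← hshift, ← hshift]
          exact (word_eq_iff s K (t₄ + 1) (t₁ + 1)).mp h41 j (by omega)
      · rintro rfl
        exact ⟨⟨t₁, rfl⟩, word_drop s K t₁⟩
    rw [indegK, key, Finset.card_singleton]
end

section
/- Under the Poisson read model, the probability that at least one repeat is unbridged is at most Σ_m a_m · exp(−2(N/G)(L−m−1)^+), where a_m is the number of repeats of length m and the two copies of each repeat are bridged independently (their locations being separated by at least L−m−2). -/
/-!
STATEMENT 11: Under the Poisson read model, the probability that at least one
repeat is unbridged is at most Σ_m a_m · exp(−2(N/G)(L−m−1)^+), where a_m is the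
number of repeats of length m and the two copies of each repeat are bridged
independently.
-/

open MeasureTheory

theorem union_bound_unbridged_repeats
    {Ω : Type*} [MeasurableSpace Ω] (μ : Measure Ω) [IsProbabilityMeasure μ]
    -- `I` indexes the repeats and `len i` is the length of repeat `i`
    {I : Type*} [Fintype I] [DecidableEq I] (len : I → ℕ) (M : ℕ)
    (hlen : ∀ i, len i ≤ M)
    (lam L : ℝ)
    -- `A i` (resp. `B i`) is the event that the first (resp. second) copy of
    -- repeat `i` is unbridged; each has probability exp(−λ(L−len i−1)⁺)
    (A B : I → Set Ω)
    (hA : ∀ i, μ (A i) = ENNReal.ofReal (Real.exp (-(lam * max (L - len i - 1) 0))))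
    (hB : ∀ i, μ (B i) = ENNReal.ofReal (Real.exp (-(lam * max (L - len i - 1) 0))))
    -- the two copies are bridged independently
    (hindep : ∀ i, μ (A i ∩ B i) = μ (A i) * μ (B i)) :
    μ (⋃ i, A i ∩ B i) ≤
      ∑ m ∈ Finset.range (M + 1),
        ((Finset.univ.filter (fun i : I => len i = m)).card : ENNReal) *
          ENNReal.ofReal (Real.exp (-(2 * lam * max (L - m - 1) 0))) := by
  calc μ (⋃ i, A i ∩ B i) ≤ ∑ i, μ (A i ∩ B i) := measure_iUnion_fintype_le _ _
    _ = ∑ i, ENNReal.ofReal (Real.exp (-(2 * lam * max (L - (len i : ℝ) - 1) 0))) := by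
        refine Finset.sum_congr rfl fun i _ => ?_
        rw [hindep i, hA i, hB i, ← ENNReal.ofReal_mul (Real.exp_nonneg _),
          ← Real.exp_add]
        congr 2
        ring
    _ = ∑ m ∈ Finset.range (M + 1), ∑ i ∈ Finset.univ.filter (fun i : I => len i = m),
          ENNReal.ofReal (Real.exp (-(2 * lam * max (L - (m : ℝ) - 1) 0))) := by
        rw [← Finset.sum_fiberwise_of_maps_to (g := fun i => len i)
          (fun i _ => Finset.mem_range.2 (Nat.lt_succ_of_le (hlen i)))]
        refine Finset.sum_congr rfl fun m _ => Finset.sum_congr rfl fun i hi => ?_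
        rw [(Finset.mem_filter.1 hi).2]
    _ = _ := by
        refine Finset.sum_congr rfl fun m _ => ?_
        rw [Finset.sum_const, nsmul_eq_mul]
end

section
/- Fix constants G > 0, λ = N/G, ℓ2 ≥ 0, ε ∈ (0,1). Define N_repeat(L) = (G/2)·log(1/ε)/(L − ℓ2 − 1) for L > ℓ2 + 1, and let N_c(L) satisfy the Lander–Waterman fixed point N_c = (G/L)·log(N_c/ε). If L* is such that N_repeat(L*) = N_c(L*) = N*, then L*/(ℓ2+1) = 2/(2−x) where x = log(1/ε)/(log N* + log(1/ε)); in particular, since 0 < x ≤ 1, we have ℓ2+1 ≤ L* ≤ 2(ℓ2+1). -/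
/-!
STATEMENT 13: If L* is the read length at which the repeat-bridging curve
N_repeat(L) = (G/2)·log(1/ε)/(L−ℓ₂−1) meets the Lander–Waterman coverage curve
N_c = (G/L)·log(N_c/ε), then L*/(ℓ₂+1) = 2/(2−x) with
x = log(1/ε)/(log N* + log(1/ε)); in particular, since 0 < x ≤ 1,
ℓ₂+1 ≤ L* ≤ 2(ℓ₂+1).
-/

theorem critical_window_identity
    (G N L ℓ₂ ε x : ℝ)
    (hG : 0 < G) (hε : 0 < ε) (hε1 : ε < 1) (hℓ₂ : 0 ≤ ℓ₂)
    (hN1 : 1 ≤ N) (hL : ℓ₂ + 1 < L)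
    -- N* lies on the repeat-bridging lower-bound curve at L*
    (hrep : N = (G / 2) * Real.log (1 / ε) / (L - ℓ₂ - 1))
    -- N* satisfies the Lander–Waterman fixed-point equation at L*
    (hcov : N = (G / L) * Real.log (N / ε))
    (hx : x = Real.log (1 / ε) / (Real.log N + Real.log (1 / ε))) :
    L / (ℓ₂ + 1) = 2 / (2 - x) ∧
    (0 < x ∧ x ≤ 1) ∧
    ℓ₂ + 1 ≤ L ∧ L ≤ 2 * (ℓ₂ + 1) := by
  have hL0 : 0 < L := by linarith
  have hN0 : (0:ℝ) < N := by linarith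
  set A := Real.log (1 / ε) with hAdef
  set B := Real.log N with hBdef
  have hA : 0 < A := Real.log_pos (by rw [lt_div_iff₀ hε]; linarith)
  have hB : 0 ≤ B := Real.log_nonneg hN1
  have hBA : 0 < B + A := by linarith
  have hlog : Real.log (N / ε) = B + A := by
    rw [Real.log_div (ne_of_gt hN0) (ne_of_gt hε), hAdef, hBdef,
      Real.log_div one_ne_zero (ne_of_gt hε), Real.log_one]; ring
  have e1 : N * L = G * (B + A) := by
    rw [hcov, hlog]; field_simp
  have e2 : N * (L - ℓ₂ - 1) * 2 = G * A := by
    have hd : L - ℓ₂ - 1 ≠ 0 := by linarith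
    rw [hrep]; field_simp
  have h3 : x * (B + A) = A := by rw [hx]; field_simp
  have hxpos : 0 < x := by rw [hx]; positivity
  have hx1 : x ≤ 1 := by rw [hx, div_le_one hBA]; linarith
  have h5 : (N * (B + A)) * ((L - ℓ₂ - 1) * 2) = (N * (B + A)) * (L * x) := by
    linear_combination (B + A) * e2 - N * L * h3 - A * e1
  have h4 : (L - ℓ₂ - 1) * 2 = L * x :=
    mul_left_cancel₀ (by positivity) h5
  have key : L * (2 - x) = 2 * (ℓ₂ + 1) := by linarith
  have h2x : 0 < 2 - x := by linarith
  refine ⟨?_, ⟨hxpos, hx1⟩, le_of_lt hL, ?_⟩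
  · rw [div_eq_div_iff (ne_of_gt (by linarith : (0:ℝ) < ℓ₂+1)) (ne_of_gt h2x)]; linarith
  · nlinarith [key]
end

section
/- Let x ∈ (0,1] satisfy x = log(1/ε)/(log N* + log(1/ε)) where N_c(G/(2L_crit)·case) bounds give log(G/L_crit) − 1 + log(1/ε) ≤ log N* + log(1/ε) ≤ log(G/L_crit) + log(1/ε) + log log(G/(ε·L_crit)). Then with r = log(G/L_crit)/log(1/ε), the quantity L*/L_crit = 2/(2−x) satisfies the approximation 2(r+1)/(2(r+1)−1) up to the error implied by the two-sided bound on x; in particular the critical window width L* − L_crit is bounded above by L_crit/(2r+1)·(1 + o(1)). -/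
/-!
STATEMENT 18: Two-sided bound on x = log(1/ε)/(log N* + log(1/ε)) from the
bounds on log N*, and the resulting critical-window approximation: with
r = log(G/L_crit)/log(1/ε), if x = 1/(r+1) then
L*/L_crit = 2(r+1)/(2(r+1)−1) = 1 + 1/(2r+1), so the critical window width
L* − L_crit equals L_crit/(2r+1).
-/

theorem critical_window_two_sided_bound
    (G Lc ε x Nstar Lstar r : ℝ)
    (hLc : 1 ≤ Lc) (hGL : Lc < G) (hε : 0 < ε) (hε1 : ε < 1)
    (hr : r = Real.log (G / Lc) / Real.log (1 / ε))
    (hx : x = Real.log (1 / ε) / (Real.log Nstar + Real.log (1 / ε)))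
    (hx01 : 0 < x ∧ x ≤ 1)
    (hpos : 0 < Real.log (G / Lc) - 1 + Real.log (1 / ε))
    -- bounds on log N* coming from N_c(2 L_crit) ≤ N* ≤ N_c(L_crit)
    (hlow : Real.log (G / Lc) - 1 + Real.log (1 / ε)
      ≤ Real.log Nstar + Real.log (1 / ε))
    (hhigh : Real.log Nstar + Real.log (1 / ε)
      ≤ Real.log (G / Lc) + Real.log (1 / ε) + Real.log (Real.log (G / (ε * Lc))))
    (hLs : Lstar / Lc = 2 / (2 - x)) :
    -- the two-sided bound on x
    (Real.log (1 / ε) /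
        (Real.log (G / Lc) + Real.log (1 / ε) + Real.log (Real.log (G / (ε * Lc))))
      ≤ x ∧
     x ≤ Real.log (1 / ε) / (Real.log (G / Lc) - 1 + Real.log (1 / ε))) ∧
    -- the window approximation when x = 1/(r+1) exactly
    (x = 1 / (r + 1) →
      Lstar / Lc = 2 * (r + 1) / (2 * (r + 1) - 1) ∧
      Lstar / Lc = 1 + 1 / (2 * r + 1) ∧
      Lstar - Lc = Lc / (2 * r + 1)) := by
  obtain ⟨hx0, hx1⟩ := hx01
  have hL : 0 < Real.log (1 / ε) := Real.log_pos (by rw [lt_div_iff₀ hε]; linarith)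
  have hr0 : 0 < r := by
    rw [hr]
    exact div_pos (Real.log_pos ((one_lt_div (by linarith)).mpr hGL)) hL
  have hden : 0 < Real.log Nstar + Real.log (1 / ε) := lt_of_lt_of_le hpos hlow
  constructor
  · constructor
    · rw [hx]
      exact div_le_div_of_nonneg_left hL.le hden hhigh
    · rw [hx]
      exact div_le_div_of_nonneg_left hL.le hpos hlow
  · intro hxr
    have h2r : 0 < 2 * r + 1 := by linarith
    have hx' : x = 1 / (r + 1) := hxr
    have h1 : Lstar / Lc = 2 * (r + 1) / (2 * (r + 1) - 1) := by
      rw [hLs, hx']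
      rw [div_eq_div_iff (by linarith) (by linarith)]
      field_simp
    have h2 : Lstar / Lc = 1 + 1 / (2 * r + 1) := by
      rw [h1]
      rw [div_eq_iff (by linarith)]
      field_simp
      ring
    refine ⟨h1, h2, ?_⟩
    have hLc0 : (0:ℝ) < Lc := by linarith
    have : Lstar = Lc * (1 + 1 / (2 * r + 1)) := by
      field_simp at h2 ⊢
      linarith [h2]
    rw [this]
    field_simp
    ring
end
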